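/- Let V be a vector space over a field F, λ, μ : V → V linear maps, s ∈ V, and consider the abelian Leibniz algebra on V (zero bracket) with bi-affine bracket {a,b} = λ(a) + μ(b) + s and Leibnizian Λ(a,b,c) = {a,{b,c}} − {{a,b},c} + {{a,c},b}. Then Λ(a,b,c) = {a,{b,b}} for all a, b, c ∈ V (homogeneity) if and only if (μ + λ − id) ∘ μ = 0. -/

import Mathlib

/-! Expanding the bi-affine bracket, every term of `Λ(a,b,c) - {a,{b,b}}` cancels except
`T c - T b` with `T = (μ + λ - id) ∘ μ`. So homogeneity says `T` is constant, and as `T` is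
linear, that means `T = 0`. -/

namespace BiaffineBracket

variable {R V : Type*} [Semiring R] [AddCommGroup V] [Module R V]

def bracket (lam mu : V →ₗ[R] V) (s a b : V) : V := lam a + mu b + s

def leibnizian (br : V → V → V) (a b c : V) : V :=
  br a (br b c) - br (br a b) c + br (br a c) b

theorem leibnizian_sub_bracket_self (lam mu : V →ₗ[R] V) (s a b c : V) :
    leibnizian (bracket lam mu s) a b c - bracket lam mu s a (bracket lam mu s b b) =
      ((mu + lam - LinearMap.id) ∘ₗ mu) c - ((mu + lam - LinearMap.id) ∘ₗ mu) b := by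
  simp only [leibnizian, bracket, map_add, LinearMap.comp_apply, LinearMap.sub_apply,
    LinearMap.add_apply, LinearMap.id_apply]
  abel

theorem forall_leibnizian_eq_iff (lam mu : V →ₗ[R] V) (s : V) :
    (∀ a b c, leibnizian (bracket lam mu s) a b c =
        bracket lam mu s a (bracket lam mu s b b)) ↔
      (mu + lam - LinearMap.id) ∘ₗ mu = 0 := by
  simp_rw [← sub_eq_zero (a := leibnizian _ _ _ _), leibnizian_sub_bracket_self, sub_eq_zero]
  refine ⟨fun h => LinearMap.ext fun c => by simpa using h 0 0 c, fun h a b c => by simp [h]⟩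

end BiaffineBracket

open BiaffineBracket in
/-- For the abelian Leibniz algebra on a vector space `V` (zero bracket) with bi-affine
bracket `{a,b} = lam a + mu b + s` and Leibnizian
`Λ(a,b,c) = {a,{b,c}} − {{a,b},c} + {{a,c},b}`, homogeneity
(`Λ(a,b,c) = {a,{b,b}}` for all `a b c`) holds if and only if
`(mu + lam − id) ∘ mu = 0`. -/
theorem homogeneous_abelian_fibre_characterization
    {F V : Type*} [Field F] [AddCommGroup V] [Module F V]
    (lam mu : V →ₗ[F] V) (s : V)
    (br : V → V → V) (hbr : ∀ a b, br a b = lam a + mu b + s)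
    (Λ : V → V → V → V)
    (hΛ : ∀ a b c, Λ a b c = br a (br b c) - br (br a b) c + br (br a c) b) :
    (∀ a b c : V, Λ a b c = br a (br b b)) ↔
      (mu + lam - LinearMap.id) ∘ₗ mu = 0 := by
  obtain rfl : br = bracket lam mu s := funext₂ hbr
  obtain rfl : Λ = leibnizian (bracket lam mu s) := funext fun a => funext₂ (hΛ a)
  exact forall_leibnizian_eq_iff lam mu s
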